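/- If f ∈ C₀(D) is non-zero, then there exists a maximal s ∈ Λ subject to the condition that |f(s,i)| = ‖f‖_∞ for some i ∈ {1,−1}. -/

import Mathlib

/-- An element of Kurepa's tree `Λ`: an injective function `t : α → ω` with countable
ordinal domain `α` and coinfinite range.  The function is represented as a total function
on ordinals which takes the junk value `0` outside of the domain. -/
structure Lambda : Type 1 where
  toFun : Ordinal.{0} → ℕ
  dom : Ordinal.{0}
  countable : dom.card ≤ Cardinal.aleph0
  inj : ∀ β γ, β < dom → γ < dom → toFun β = toFun γ → β = γ
  coinfinite : {n : ℕ | ∀ β, β < dom → toFun β ≠ n}.Infinite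
  junk : ∀ β, ¬ β < dom → toFun β = 0

/-- The tree order on `Λ`: `s ≼ t` iff `t` extends `s`. -/
def Lambda.le (s t : Lambda) : Prop :=
  s.dom ≤ t.dom ∧ ∀ β, β < s.dom → s.toFun β = t.toFun β

/-- The strict tree order on `Λ`. -/
def Lambda.lt (s t : Lambda) : Prop := Lambda.le s t ∧ s ≠ t

/-- `r ≺ s` for `r ∈ Λ ∪ {0}` (`none` plays the role of the extra least element `0`). -/
def precLt : Option Lambda → Lambda → Prop
  | none, _ => True
  | some r, s => Lambda.lt r s

/-- The interval `(r, t] = {s ∈ Λ : r ≺ s ≼ t}`, with `r ∈ Λ ∪ {0}`. -/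
def lamIoc (r : Option Lambda) (t : Lambda) : Set Lambda :=
  {s | precLt r s ∧ Lambda.le s t}

/-- The position of the minimum of `t` on the ordinal interval `[δ, β)`. -/
noncomputable def minPos (t : Ordinal.{0} → ℕ) (δ β : Ordinal.{0}) : Ordinal.{0} :=
  sInf {ξ | δ ≤ ξ ∧ ξ < β ∧ ∀ η, δ ≤ η → η < β → t ξ ≤ t η}

lemma minPos_lt (t : Ordinal.{0} → ℕ) {δ β : Ordinal.{0}} (h : δ < β) : minPos t δ β < β := by
  have hne : {ξ : Ordinal.{0} | δ ≤ ξ ∧ ξ < β ∧ ∀ η, δ ≤ η → η < β → t ξ ≤ t η}.Nonempty := by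
    have h1 : {n : ℕ | ∃ ξ : Ordinal.{0}, δ ≤ ξ ∧ ξ < β ∧ t ξ = n}.Nonempty :=
      ⟨t δ, δ, le_refl _, h, rfl⟩
    obtain ⟨ξ, hξ1, hξ2, hξ3⟩ := Nat.sInf_mem h1
    refine ⟨ξ, hξ1, hξ2, fun η h1' h2' => ?_⟩
    rw [hξ3]
    exact Nat.sInf_le ⟨η, h1', h2', rfl⟩
  obtain ⟨ξ, hξ⟩ := hne
  calc minPos t δ β ≤ ξ := csInf_le (OrderBot.bddBelow _) hξ
    _ < β := hξ.2.1

/-- The sequence `τ` computed from the starting ordinal `β₀` downwards: `τ` is obtained by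
repeatedly passing from `β` to the position of the minimum of `t` on `[δ, β)`, stopping upon
reaching `δ`.  The resulting finite sequence `(β_k, …, β_1)` is recorded as a list in the
order `[β_k, …, β_1]` (so concatenation of the lists corresponds to `⌢`). -/
noncomputable def tauFrom (δ : Ordinal.{0}) (t : Ordinal.{0} → ℕ) : Ordinal.{0} → List Ordinal.{0} :=
  WellFounded.fix wellFounded_lt
    (fun β IH => if h : δ < β then IH (minPos t δ β) (minPos_lt t h) ++ [minPos t δ β] else [])

/-- The finite sequence `τ(s,t)` of ordinals, for `s ≼ t` in `Λ`. -/
noncomputable def tau (s t : Lambda) : List Ordinal.{0} :=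
  tauFrom s.dom t.toFun t.dom

/-- `ℓ(s,t)`, the length of `τ(s,t)`. -/
noncomputable def ell (s t : Lambda) : ℕ := (tau s t).length

/-- The underlying set of the `Λ`-duplicate: `D = Λ × {1, -1}`. -/
abbrev Dup : Type 1 := Lambda × ℤˣ

/-- The basic open sets `W(r,t,i)` of the `Λ`-duplicate. -/
noncomputable def Wset (r : Option Lambda) (t : Lambda) (i : ℤˣ) : Set Dup :=
  {q | q.1 ∈ lamIoc r t ∧ q.2 = (-1) ^ ell q.1 t * i}

/-- The collection of all basic open sets `W(r,t,i)` with `r ≺ t`. -/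
noncomputable def WBasis : Set (Set Dup) :=
  {S | ∃ (r : Option Lambda) (t : Lambda) (i : ℤˣ), precLt r t ∧ S = Wset r t i}

/-- The topology of the `Λ`-duplicate, generated by the basic sets `W(r,t,i)`. -/
noncomputable instance : TopologicalSpace Dup := TopologicalSpace.generateFrom WBasis


/-! The points where `|f|` reaches `‖f‖` form a compact set `K`, nonempty because `f` vanishes at
infinity. The basic neighbourhood `W(0, t, i)` of `(t, i)` lies below `t` in the first coordinate,
so a cluster point in `K` of a chain of points of `K` bounds the chain from above, and Zorn's lemma
gives a maximal element. -/

open Filter Topology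
open scoped ZeroAtInfty

namespace ZeroAtInftyContinuousMap

variable {X E : Type*} [TopologicalSpace X]

theorem isCompact_setOf_le_norm [SeminormedAddCommGroup E] (f : C₀(X, E)) {ε : ℝ}
    (hε : 0 < ε) : IsCompact {x | ε ≤ ‖f x‖} := by
  have small : {x | ‖f x‖ < ε} ∈ cocompact X :=
    (tendsto_zero_iff_norm_tendsto_zero.1 (zero_at_infty f)).eventually (gt_mem_nhds hε)
  obtain ⟨t, ht, hsub⟩ := mem_cocompact'.1 small
  refine ht.of_isClosed_subset (isClosed_le continuous_const (map_continuous f).norm) ?_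
  simpa only [Set.compl_ofPred, not_lt] using hsub

theorem exists_norm_apply_eq_norm [NormedAddCommGroup E] (f : C₀(X, E)) (hf : f ≠ 0) :
    ∃ x, ‖f x‖ = ‖f‖ := by
  obtain ⟨x₀, hx₀⟩ : ∃ x₀, f x₀ ≠ 0 := by
    by_contra! h
    exact hf (ext h)
  have small : ∀ᶠ x in cocompact X, ‖f x‖ ≤ ‖f x₀‖ :=
    (tendsto_zero_iff_norm_tendsto_zero.1 (zero_at_infty f)).eventually
      (ge_mem_nhds (norm_pos_iff.2 hx₀))
  obtain ⟨x, hx⟩ := (map_continuous f).norm.exists_forall_ge' x₀ small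
  exact ⟨x, le_antisymm (f.toBCF.norm_coe_le_norm x)
    ((BoundedContinuousFunction.norm_le (norm_nonneg _)).2 hx)⟩

end ZeroAtInftyContinuousMap

section ChainsInCompactSets

variable {X P : Type*} [TopologicalSpace X] [Preorder P] {π : X → P} {K : Set X}

theorem IsCompact.exists_upperBound_of_isChain (hπ : ∀ x, ∀ᶠ y in 𝓝 x, π y ≤ π x)
    (hK : IsCompact K) {c : Set P} (hcK : c ⊆ π '' K) (hc : IsChain (· ≤ ·) c)
    (hne : c.Nonempty) : ∃ x ∈ K, ∀ a ∈ c, a ≤ π x := by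
  choose σ hσK hσ using fun a : c => hcK a.2
  have : Nonempty c := hne.to_subtype
  have : IsDirected c (· ≤ ·) := ⟨fun a b => by
    obtain ⟨d, hd, had, hbd⟩ := hc.directedOn a a.2 b b.2
    exact ⟨⟨d, hd⟩, had, hbd⟩⟩
  obtain ⟨p, hpK, hp⟩ := hK.exists_clusterPt (f := map σ atTop)
    (tendsto_principal.2 (Eventually.of_forall hσK))
  refine ⟨p, hpK, fun a ha => ?_⟩
  obtain ⟨b, hab, hbp⟩ := frequently_atTop.1 (frequently_map.1 (hp.frequently (hπ p))) ⟨a, ha⟩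
  exact (show a ≤ b from hab).trans ((hσ b).ge.trans hbp)

theorem IsCompact.exists_maximal_image (hπ : ∀ x, ∀ᶠ y in 𝓝 x, π y ≤ π x)
    (hK : IsCompact K) (hne : K.Nonempty) : ∃ x ∈ K, Maximal (· ∈ π '' K) (π x) := by
  obtain ⟨x₀, hx₀⟩ := hne
  have chains_bounded : ∀ c ⊆ π '' K, IsChain (· ≤ ·) c → ∀ a ∈ c, ∃ b ∈ π '' K, ∀ z ∈ c, z ≤ b :=
    fun c hcK hc a ha =>
      let ⟨x, hxK, hx⟩ := hK.exists_upperBound_of_isChain hπ hcK hc ⟨a, ha⟩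
      ⟨π x, ⟨x, hxK, rfl⟩, hx⟩
  obtain ⟨_, -, hmax⟩ := zorn_le_nonempty₀ (π '' K) chains_bounded (π x₀) ⟨x₀, hx₀, rfl⟩
  obtain ⟨x, hxK, rfl⟩ := hmax.prop
  exact ⟨x, hxK, hmax⟩

end ChainsInCompactSets

instance : PartialOrder Lambda where
  le := Lambda.le
  le_refl _ := ⟨le_rfl, fun _ _ => rfl⟩
  le_trans _ _ _ hst htu :=
    ⟨hst.1.trans htu.1, fun β hβ => (hst.2 β hβ).trans (htu.2 β (hβ.trans_le hst.1))⟩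
  le_antisymm s t hst hts := by
    have hdom : s.dom = t.dom := hst.1.antisymm hts.1
    have hfun : s.toFun = t.toFun := funext fun β => by
      by_cases hβ : β < s.dom
      · exact hst.2 β hβ
      · rw [s.junk β hβ, t.junk β (hdom ▸ hβ)]
    cases s; cases t
    simp_all

theorem Lambda.lt_iff_lt {s t : Lambda} : Lambda.lt s t ↔ s < t :=
  (lt_iff_le_and_ne (a := s) (b := t)).symm

theorem ell_self (t : Lambda) : ell t t = 0 := by
  rw [ell, tau, tauFrom, WellFounded.fix_eq, dif_neg (lt_irrefl _), List.length_nil]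

theorem mem_Wset_none_self (t : Lambda) (i : ℤˣ) : (t, i) ∈ Wset none t i :=
  ⟨⟨trivial, (le_rfl : t ≤ t)⟩, by rw [ell_self, pow_zero, one_mul]⟩

theorem eventually_nhds_fst_le (x : Dup) : ∀ᶠ y in 𝓝 x, y.1 ≤ x.1 :=
  have hW : Wset none x.1 x.2 ∈ WBasis := ⟨none, x.1, x.2, trivial, rfl⟩
  mem_of_superset
    ((TopologicalSpace.isOpen_generateFrom_of_mem hW).mem_nhds (mem_Wset_none_self x.1 x.2))
    fun _ hy => hy.1.2

/-- If `f ∈ C₀(D)` is non-zero, there is a maximal `s ∈ Λ` subject to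
`|f(s,i)| = ‖f‖∞` for some `i ∈ {1,-1}`. -/
theorem exists_maximal_norm_attaining (f : ZeroAtInftyContinuousMap Dup ℝ) (hf : f ≠ 0) :
    ∃ s : Lambda, (∃ i : ℤˣ, |f (s, i)| = ‖f‖) ∧
      ∀ s' : Lambda, (∃ i : ℤˣ, |f (s', i)| = ‖f‖) → ¬ Lambda.lt s s' := by
  set K : Set Dup := {x | ‖f‖ ≤ ‖f x‖}
  have attains_iff (s : Lambda) : (∃ i : ℤˣ, |f (s, i)| = ‖f‖) ↔ s ∈ Prod.fst '' K := by
    simp only [K, Set.mem_image, Set.mem_ofPred_eq, Prod.exists, exists_and_right,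
      exists_eq_right, ← Real.norm_eq_abs]
    exact exists_congr fun i => ⟨ge_of_eq, (f.toBCF.norm_coe_le_norm _).antisymm⟩
  obtain ⟨x, hx⟩ := f.exists_norm_apply_eq_norm hf
  obtain ⟨m, hmK, hmax⟩ := (f.isCompact_setOf_le_norm (norm_pos_iff.2 hf)).exists_maximal_image
    eventually_nhds_fst_le ⟨x, hx.ge⟩
  exact ⟨m.1, (attains_iff _).2 ⟨m, hmK, rfl⟩,
    fun s' hs' hlt => hmax.not_gt ((attains_iff s').1 hs') (Lambda.lt_iff_lt.1 hlt)⟩
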